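/- Let (X,φ) and (Y,ψ) be Smale spaces. Suppose there exist a homeomorphism h : X → Y and continuous functions c₁ : X → ℤ and k₀ : X → ℤ_{≥0} such that (ψ^{c₁(x)}(h(x)), h(φ(x))) ∈ G_ψ^{a,k₀(x)} for all x ∈ X. Then for each n ∈ ℤ there exists a continuous function k_{1,n} : X → ℤ_{≥0} such that ξ₁^n(x) := (ψ^{c₁^n(x)}(h(x)), h(φ^n(x))) ∈ G_ψ^{a,k_{1,n}(x)} for all x ∈ X. In particular, ξ₁^n(x) ∈ G_ψ^a for every x, and the map ξ₁^n : X → G_ψ^a is continuous with respect to the inductive limit topology on G_ψ^a. -/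

import Mathlib

open Filter Set Topology

noncomputable section

/-- Integer iterate of a homeomorphism. -/
def hIter {X : Type*} [TopologicalSpace X] (φ : X ≃ₜ X) (n : ℤ) (x : X) : X :=
  ((φ.toEquiv : Equiv.Perm X) ^ n) x

/-- The cocycle sums `f^n` of a function `f : X → ℤ` along the iterates of `φ`:
`f^n(x) = Σ_{i=0}^{n-1} f(φ^i(x))` for `n > 0`, `f^0 = 0`, and
`f^n(x) = −Σ_{i=n}^{-1} f(φ^i(x))` for `n < 0`. -/
def cSum {X : Type*} [TopologicalSpace X] (φ : X ≃ₜ X) (f : X → ℤ) (n : ℤ) (x : X) : ℤ :=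
  if 0 ≤ n then ∑ i ∈ Finset.range n.toNat, f (hIter φ i x)
  else -∑ i ∈ Finset.range (-n).toNat, f (hIter φ (n + i) x)

/-- Stable asymptotic pairs (limit definition). -/
def asympS {X : Type*} [MetricSpace X] (φ : X ≃ₜ X) : Set (X × X) :=
  {p | Tendsto (fun n : ℕ => dist (hIter φ n p.1) (hIter φ n p.2)) atTop (nhds 0)}

/-- Unstable asymptotic pairs (limit definition). -/
def asympU {X : Type*} [MetricSpace X] (φ : X ≃ₜ X) : Set (X × X) :=
  {p | Tendsto (fun n : ℕ => dist (hIter φ (-(n : ℤ)) p.1) (hIter φ (-(n : ℤ)) p.2))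
    atTop (nhds 0)}

/-- Asymptotic pairs (limit definition). -/
def asympA {X : Type*} [MetricSpace X] (φ : X ≃ₜ X) : Set (X × X) := asympS φ ∩ asympU φ

/-- The `ω`-limit set of `x`. -/
def omegaSet {X : Type*} [MetricSpace X] (φ : X ≃ₜ X) (x : X) : Set X :=
  {z | ∃ n : ℕ → ℕ, StrictMono n ∧ Tendsto (fun i => hIter φ (n i) x) atTop (nhds z)}

/-- The `α`-limit set of `x`. -/
def alphaSet {X : Type*} [MetricSpace X] (φ : X ≃ₜ X) (x : X) : Set X :=
  {z | ∃ n : ℕ → ℤ, StrictAnti n ∧ Tendsto (fun i => hIter φ (n i) x) atTop (nhds z)}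

/-- A Smale space structure on a compact metric space `X`. -/
structure SmaleSpace (X : Type*) [MetricSpace X] [CompactSpace X] where
  phi : X ≃ₜ X
  eps : ℝ
  lam : ℝ
  br : X → X → X
  eps_pos : 0 < eps
  lam_pos : 0 < lam
  lam_lt_one : lam < 1
  br_cont : ContinuousOn (fun p : X × X => br p.1 p.2) {p : X × X | dist p.1 p.2 < eps}
  br_self : ∀ x : X, br x x = x
  br_assoc_left : ∀ x y z : X, dist x y < eps → dist (br x y) z < eps → dist x z < eps →
    br (br x y) z = br x z
  br_assoc_right : ∀ x y z : X, dist y z < eps → dist x (br y z) < eps → dist x z < eps →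
    br x (br y z) = br x z
  phi_br : ∀ x y : X, dist x y < eps → dist (phi x) (phi y) < eps →
    phi (br x y) = br (phi x) (phi y)
  contract_s : ∀ x y z : X, br y x = y → dist x y < eps → br z x = z → dist x z < eps →
    dist (phi y) (phi z) ≤ lam * dist y z
  contract_u : ∀ x y z : X, br x y = y → dist x y < eps → br x z = z → dist x z < eps →
    dist (phi.symm y) (phi.symm z) ≤ lam * dist y z

namespace SmaleSpace

variable {X Y : Type*} [MetricSpace X] [CompactSpace X] [MetricSpace Y] [CompactSpace Y]

/-- Local stable set `X^s(x,ε)`. -/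
def Xs (S : SmaleSpace X) (x : X) (ε : ℝ) : Set X := {y | S.br y x = y ∧ dist x y < ε}

/-- Local unstable set `X^u(x,ε)`. -/
def Xu (S : SmaleSpace X) (x : X) (ε : ℝ) : Set X := {y | S.br x y = y ∧ dist x y < ε}

def Gs0 (S : SmaleSpace X) : Set (X × X) := {p | p.2 ∈ S.Xs p.1 S.eps}

def Gu0 (S : SmaleSpace X) : Set (X × X) := {p | p.2 ∈ S.Xu p.1 S.eps}

/-- `G_φ^{s,n} = (φ×φ)^{-n}(G_φ^{s,0})`. -/
def GsN (S : SmaleSpace X) (n : ℤ) : Set (X × X) :=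
  {p | (hIter S.phi n p.1, hIter S.phi n p.2) ∈ S.Gs0}

/-- `G_φ^{u,n} = (φ×φ)^{n}(G_φ^{u,0})`. -/
def GuN (S : SmaleSpace X) (n : ℤ) : Set (X × X) :=
  {p | (hIter S.phi (-n) p.1, hIter S.phi (-n) p.2) ∈ S.Gu0}

def GaN (S : SmaleSpace X) (n : ℤ) : Set (X × X) := S.GsN n ∩ S.GuN n

/-- The asymptotic equivalence relation `G_φ^a = ⋃_{n ≥ 0} G_φ^{a,n}`. -/
def Ga (S : SmaleSpace X) : Set (X × X) := ⋃ n : ℕ, S.GaN n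

lemma gaN_subset_ga (S : SmaleSpace X) (n : ℕ) : S.GaN n ⊆ S.Ga :=
  Set.subset_iUnion (fun k : ℕ => S.GaN k) n

/-- The inductive limit topology on `G_φ^a`: a set is open iff its intersection with each
`G_φ^{a,n}` is open in the subspace topology from `X × X`. -/
def gaTopology (S : SmaleSpace X) : TopologicalSpace ↥S.Ga :=
  ⨆ n : ℕ, TopologicalSpace.coinduced (Set.inclusion (S.gaN_subset_ga n)) inferInstance

/-- Irreducibility of a Smale space. -/
def Irreducible (S : SmaleSpace X) : Prop :=
  ∀ U V : Set X, IsOpen U → U.Nonempty → IsOpen V → V.Nonempty →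
    ∃ K : ℕ, ((hIter S.phi K '' U) ∩ V).Nonempty

def IsPeriodicPoint (S : SmaleSpace X) (x : X) : Prop :=
  ∃ p : ℕ, 0 < p ∧ hIter S.phi p x = x

/-- `h` is a flip conjugacy between `(X,φ)` and `(Y,ψ)`. -/
def IsFlipConjugacy (S : SmaleSpace X) (T : SmaleSpace Y) (h : X ≃ₜ Y) : Prop :=
  (∀ x, h (S.phi x) = T.phi (h x)) ∨ (∀ x, h (S.phi x) = T.phi.symm (h x))

def FlipConjugate (S : SmaleSpace X) (T : SmaleSpace Y) : Prop :=
  ∃ h : X ≃ₜ Y, IsFlipConjugacy S T h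

/-- An isomorphism of the principal étale groupoids `G_φ^a` and `G_ψ^a`:
a bijection which is a homeomorphism for the inductive limit topologies and preserves
the (equivalence relation) groupoid structure. -/
structure GaIso (S : SmaleSpace X) (T : SmaleSpace Y) where
  toEquiv : ↥S.Ga ≃ ↥T.Ga
  cont : @Continuous _ _ S.gaTopology T.gaTopology toEquiv
  cont_symm : @Continuous _ _ T.gaTopology S.gaTopology toEquiv.symm
  map_mul : ∀ p q r : ↥S.Ga, (p : X × X).2 = (q : X × X).1 →
    (r : X × X) = ((p : X × X).1, (q : X × X).2) →
    (toEquiv p : Y × Y).2 = (toEquiv q : Y × Y).1 ∧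
      (toEquiv r : Y × Y) = ((toEquiv p : Y × Y).1, (toEquiv q : Y × Y).2)

end SmaleSpace

/-!
The levels `G^{a,m}_ψ` increase with `m`, `ψ^j` maps `G^{a,m}_ψ` into `G^{a,m+|j|}_ψ`, and two
pairs in `G^{a,m}_ψ` compose to a pair in `G^{a,m+J}_ψ` once `λ^J < 1/2`. Hence "`(f x, g x)`
lies in one fixed level `G^{a,K}_ψ` for all `x`" is an equivalence relation on maps `X → Y`,
invariant under `x ↦ ψ^{u(x)}` for bounded `u`. By compactness `k₀` and `c₁` are bounded, and the
cocycle identity `c₁^{n+1}(x) = c₁^n(x) + c₁(φ^n x)` propagates the hypothesis (the case `n = 1`)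
from `n` to `n ± 1`, so every `ξ₁^n` lands in a single level `G^{a,K}_ψ`. A map into one level
that is continuous into `Y × Y` is continuous for the inductive limit topology.
-/

section Iterates

variable {X : Type*} [TopologicalSpace X]

theorem hIter_eq_zpow (φ : X ≃ₜ X) (n : ℤ) : hIter φ n = ⇑(φ ^ n) := by
  let toPerm : (X ≃ₜ X) →* Equiv.Perm X := ⟨⟨Homeomorph.toEquiv, rfl⟩, fun _ _ => rfl⟩
  funext x
  exact congrArg (· x) (map_zpow toPerm φ n).symm

theorem hIter_zero (φ : X ≃ₜ X) (x : X) : hIter φ 0 x = x := rfl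

theorem hIter_one (φ : X ≃ₜ X) (x : X) : hIter φ 1 x = φ x := rfl

theorem hIter_add (φ : X ≃ₜ X) (m n : ℤ) (x : X) :
    hIter φ (m + n) x = hIter φ m (hIter φ n x) := by
  simp only [hIter_eq_zpow, zpow_add, Homeomorph.mul_apply]

theorem hIter_symm (φ : X ≃ₜ X) (n : ℤ) (x : X) : hIter φ.symm n x = hIter φ (-n) x := by
  rw [hIter_eq_zpow, hIter_eq_zpow, zpow_neg, ← inv_zpow]
  rfl

theorem hIter_natCast_succ (φ : X ≃ₜ X) (j : ℕ) (x : X) :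
    hIter φ ((j + 1 : ℕ) : ℤ) x = φ (hIter φ j x) := by
  rw [Nat.cast_succ, add_comm, hIter_add, hIter_one]

theorem continuous_hIter (φ : X ≃ₜ X) (n : ℤ) : Continuous (hIter φ n) := by
  rw [hIter_eq_zpow]
  exact (φ ^ n).continuous

theorem Continuous.hIter {Z : Type*} [TopologicalSpace Z] (φ : X ≃ₜ X) {m : Z → ℤ}
    {g : Z → X} (hm : Continuous m) (hg : Continuous g) : Continuous fun z => hIter φ (m z) (g z) :=
  (continuous_prod_of_discrete_left.mpr (continuous_hIter φ) :
    Continuous fun p : ℤ × X => _root_.hIter φ p.1 p.2).comp (hm.prodMk hg)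

theorem cSum_of_nonpos (φ : X ≃ₜ X) (f : X → ℤ) {n : ℤ} (hn : n ≤ 0) (x : X) :
    cSum φ f n x = -∑ i ∈ Finset.range (-n).toNat, f (hIter φ (n + i) x) := by
  rcases hn.lt_or_eq with hn | rfl
  · exact if_neg hn.not_ge
  · simp [cSum]

theorem cSum_add_one (φ : X ≃ₜ X) (f : X → ℤ) (n : ℤ) (x : X) :
    cSum φ f (n + 1) x = cSum φ f n x + f (hIter φ n x) := by
  rcases le_or_gt 0 n with hn | hn
  · lift n to ℕ using hn
    rw [cSum, cSum, if_pos (by omega), if_pos (by omega),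
      show ((n : ℤ) + 1).toNat = n + 1 by omega, Finset.sum_range_succ]
    simp
  · rw [cSum_of_nonpos φ f hn.le, cSum_of_nonpos φ f (by omega),
      show (-n).toNat = (-(n + 1)).toNat + 1 by omega, Finset.sum_range_succ']
    have shift : ∀ i : ℕ, n + ((i + 1 : ℕ) : ℤ) = n + 1 + i := fun i => by push_cast; ring
    simp only [shift, Nat.cast_zero, add_zero, neg_add, neg_add_cancel_right]

theorem continuous_cSum (φ : X ≃ₜ X) {f : X → ℤ} (hf : Continuous f) (n : ℤ) :
    Continuous (cSum φ f n) := by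
  unfold cSum
  split_ifs
  · exact continuous_finsetSum _ fun i _ => hf.comp (continuous_hIter φ i)
  · exact (continuous_finsetSum _ fun i _ => hf.comp (continuous_hIter φ _)).neg

end Iterates

namespace SmaleSpace

variable {Y : Type*} [MetricSpace Y] [CompactSpace Y] (T : SmaleSpace Y) {a b c : Y}

/-- Time reversal `(Y, ψ⁻¹, (x, y) ↦ [y, x])`. It exchanges `G^s` and `G^u`, so every fact about
the unstable relation is its stable counterpart for the reversed space. -/
def reverse : SmaleSpace Y where
  phi := T.phi.symm
  eps := T.eps
  lam := T.lam
  br x y := T.br y x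
  eps_pos := T.eps_pos
  lam_pos := T.lam_pos
  lam_lt_one := T.lam_lt_one
  br_cont := by
    refine (T.br_cont.comp continuous_swap.continuousOn fun p hp => ?_ : _)
    simpa [dist_comm] using hp
  br_self := T.br_self
  br_assoc_left x y z hxy hbz hxz := by
    rw [dist_comm] at hxy hbz hxz
    exact T.br_assoc_right z y x hxy hbz hxz
  br_assoc_right x y z hyz hxb hxz := by
    rw [dist_comm] at hyz hxb hxz
    exact T.br_assoc_left z y x hyz hxb hxz
  phi_br x y hxy hφxy := by
    rw [dist_comm] at hxy hφxy
    have := T.phi_br _ _ hφxy (by simpa using hxy)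
    simp only [Homeomorph.apply_symm_apply] at this
    rw [← this, Homeomorph.symm_apply_apply]
  contract_s x y z hy hxy hz hxz := T.contract_u x y z hy hxy hz hxz
  contract_u x y z hy hxy hz hxz := T.contract_s x y z hy hxy hz hxz

theorem gsN_reverse (n : ℤ) : T.reverse.GsN n = T.GuN n := by
  ext p
  simp only [GsN, GuN, reverse, hIter_symm]
  rfl

theorem guN_reverse (n : ℤ) : T.reverse.GuN n = T.GsN n := by
  ext p
  simp only [GsN, GuN, reverse, hIter_symm, neg_neg]
  rfl

theorem dist_phi_le_of_mem_gs0 (h : (a, b) ∈ T.Gs0) :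
    dist (T.phi a) (T.phi b) ≤ T.lam * dist a b :=
  T.contract_s a a b (T.br_self a) (by simpa using T.eps_pos) h.1 h.2

theorem phi_mem_gs0 (h : (a, b) ∈ T.Gs0) : (T.phi a, T.phi b) ∈ T.Gs0 := by
  have hd : dist (T.phi a) (T.phi b) < T.eps := (T.dist_phi_le_of_mem_gs0 h).trans_lt
    ((mul_le_of_le_one_left dist_nonneg T.lam_lt_one.le).trans_lt h.2)
  refine ⟨?_, hd⟩
  rw [dist_comm] at hd
  have := T.phi_br b a (by rw [dist_comm]; exact h.2) hd
  rw [h.1] at this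
  exact this.symm

theorem hIter_natCast_mem_gs0 (h : (a, b) ∈ T.Gs0) (j : ℕ) :
    (hIter T.phi j a, hIter T.phi j b) ∈ T.Gs0 := by
  induction j with
  | zero => exact h
  | succ j ih => rw [hIter_natCast_succ, hIter_natCast_succ]; exact T.phi_mem_gs0 ih

theorem dist_hIter_le_of_mem_gs0 (h : (a, b) ∈ T.Gs0) (j : ℕ) :
    dist (hIter T.phi j a) (hIter T.phi j b) ≤ T.lam ^ j * dist a b := by
  induction j with
  | zero => simp [hIter_zero]
  | succ j ih =>
    rw [hIter_natCast_succ, hIter_natCast_succ, pow_succ', mul_assoc]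
    exact (T.dist_phi_le_of_mem_gs0 (T.hIter_natCast_mem_gs0 h j)).trans
      (mul_le_mul_of_nonneg_left ih T.lam_pos.le)

theorem gs0_symm (h : (a, b) ∈ T.Gs0) : (b, a) ∈ T.Gs0 := by
  have := T.br_assoc_right a b a (by rw [dist_comm]; exact h.2) (by rw [h.1]; exact h.2)
    (by simpa using T.eps_pos)
  rw [h.1, T.br_self] at this
  exact ⟨this, by rw [dist_comm]; exact h.2⟩

theorem gs0_trans_of_dist_lt (hab : (a, b) ∈ T.Gs0) (hbc : (b, c) ∈ T.Gs0)
    (dab : dist a b < T.eps / 2) (dbc : dist b c < T.eps / 2) : (a, c) ∈ T.Gs0 := by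
  obtain ⟨hba : T.br b a = b, -⟩ := hab
  obtain ⟨hcb : T.br c b = c, -⟩ := hbc
  have dac : dist a c < T.eps := (dist_triangle a b c).trans_lt (by linarith)
  have := T.br_assoc_right c b a (by rw [dist_comm]; linarith [T.eps_pos])
    (by rw [hba, dist_comm]; linarith [T.eps_pos]) (by rw [dist_comm]; exact dac)
  rw [hba, hcb] at this
  exact ⟨this.symm, dac⟩

theorem gsN_refl (m : ℤ) (y : Y) : (y, y) ∈ T.GsN m :=
  ⟨T.br_self _, by simpa using T.eps_pos⟩

theorem guN_refl (m : ℤ) (y : Y) : (y, y) ∈ T.GuN m :=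
  ⟨T.br_self _, by simpa using T.eps_pos⟩

theorem gsN_mono {m m' : ℤ} (hm : m ≤ m') : T.GsN m ⊆ T.GsN m' := by
  intro p hp
  obtain ⟨j, rfl⟩ := Int.exists_add_of_le hm
  change (hIter T.phi (m + j) p.1, hIter T.phi (m + j) p.2) ∈ T.Gs0
  rw [add_comm, hIter_add, hIter_add]
  exact T.hIter_natCast_mem_gs0 hp j

theorem guN_mono {m m' : ℤ} (hm : m ≤ m') : T.GuN m ⊆ T.GuN m' := by
  rw [← gsN_reverse, ← gsN_reverse]
  exact T.reverse.gsN_mono hm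

theorem gsN_symm {m : ℤ} (h : (a, b) ∈ T.GsN m) : (b, a) ∈ T.GsN m :=
  T.gs0_symm h

theorem guN_symm {m : ℤ} (h : (a, b) ∈ T.GuN m) : (b, a) ∈ T.GuN m := by
  rw [← gsN_reverse] at h ⊢
  exact T.reverse.gsN_symm h

/-- After `J` more forward steps both stable steps are shorter than `ε / 2`. -/
theorem gsN_trans {J : ℕ} (hJ : T.lam ^ J < 1 / 2) {m : ℤ} (hab : (a, b) ∈ T.GsN m)
    (hbc : (b, c) ∈ T.GsN m) : (a, c) ∈ T.GsN (m + J) := by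
  have short : ∀ {u v : Y}, (u, v) ∈ T.Gs0 →
      dist (hIter T.phi J u) (hIter T.phi J v) < T.eps / 2 := fun huv =>
    calc dist (hIter T.phi J _) (hIter T.phi J _) ≤ T.lam ^ J * dist _ _ :=
          T.dist_hIter_le_of_mem_gs0 huv J
      _ ≤ T.lam ^ J * T.eps := mul_le_mul_of_nonneg_left huv.2.le (pow_pos T.lam_pos J).le
      _ < 1 / 2 * T.eps := mul_lt_mul_of_pos_right hJ T.eps_pos
      _ = T.eps / 2 := by ring
  change (hIter T.phi (m + J) a, hIter T.phi (m + J) c) ∈ T.Gs0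
  rw [add_comm, hIter_add, hIter_add]
  exact T.gs0_trans_of_dist_lt (T.hIter_natCast_mem_gs0 hab J) (T.hIter_natCast_mem_gs0 hbc J)
    (short hab) (short hbc)

theorem guN_trans {J : ℕ} (hJ : T.lam ^ J < 1 / 2) {m : ℤ} (hab : (a, b) ∈ T.GuN m)
    (hbc : (b, c) ∈ T.GuN m) : (a, c) ∈ T.GuN (m + J) := by
  rw [← gsN_reverse] at hab hbc ⊢
  exact T.reverse.gsN_trans hJ hab hbc

theorem hIter_mem_gsN_iff (j m : ℤ) :
    (hIter T.phi j a, hIter T.phi j b) ∈ T.GsN m ↔ (a, b) ∈ T.GsN (m + j) := by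
  simp only [GsN, mem_ofPred_eq, hIter_add]

theorem hIter_mem_guN_iff (j m : ℤ) :
    (hIter T.phi j a, hIter T.phi j b) ∈ T.GuN m ↔ (a, b) ∈ T.GuN (m - j) := by
  rw [GuN, GuN, mem_ofPred_eq, mem_ofPred_eq, show -(m - j) = -m + j by ring]
  simp only [hIter_add]

theorem gaN_refl (m : ℤ) (y : Y) : (y, y) ∈ T.GaN m :=
  ⟨T.gsN_refl m y, T.guN_refl m y⟩

theorem gaN_mono {m m' : ℤ} (hm : m ≤ m') : T.GaN m ⊆ T.GaN m' :=
  inter_subset_inter (T.gsN_mono hm) (T.guN_mono hm)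

theorem gaN_symm {m : ℤ} (h : (a, b) ∈ T.GaN m) : (b, a) ∈ T.GaN m :=
  ⟨T.gsN_symm h.1, T.guN_symm h.2⟩

theorem gaN_trans {J : ℕ} (hJ : T.lam ^ J < 1 / 2) {m : ℤ} (hab : (a, b) ∈ T.GaN m)
    (hbc : (b, c) ∈ T.GaN m) : (a, c) ∈ T.GaN (m + J) :=
  ⟨T.gsN_trans hJ hab.1 hbc.1, T.guN_trans hJ hab.2 hbc.2⟩

theorem hIter_mem_gaN (j : ℤ) {m : ℤ} (h : (a, b) ∈ T.GaN m) :
    (hIter T.phi j a, hIter T.phi j b) ∈ T.GaN (m + j.natAbs) :=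
  ⟨(T.hIter_mem_gsN_iff j _).2 (T.gsN_mono (by omega) h.1),
    (T.hIter_mem_guN_iff j _).2 (T.guN_mono (by omega) h.2)⟩

def UniformlyAsymptotic {Z : Type*} (f g : Z → Y) : Prop :=
  ∃ K : ℕ, ∀ z, (f z, g z) ∈ T.GaN K

namespace UniformlyAsymptotic

variable {T} {Z : Type*} {f g l : Z → Y}

theorem of_bddAbove {k : Z → ℕ} (hk : BddAbove (range k)) (h : ∀ z, (f z, g z) ∈ T.GaN (k z)) :
    T.UniformlyAsymptotic f g := by
  obtain ⟨K, hK⟩ := hk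
  exact ⟨K, fun z => T.gaN_mono (Nat.cast_le.2 (hK ⟨z, rfl⟩)) (h z)⟩

theorem refl (f : Z → Y) : T.UniformlyAsymptotic f f :=
  ⟨0, fun z => T.gaN_refl 0 (f z)⟩

theorem symm (h : T.UniformlyAsymptotic f g) : T.UniformlyAsymptotic g f :=
  let ⟨K, hK⟩ := h
  ⟨K, fun z => T.gaN_symm (hK z)⟩

theorem trans (hfg : T.UniformlyAsymptotic f g) (hgl : T.UniformlyAsymptotic g l) :
    T.UniformlyAsymptotic f l := by
  obtain ⟨K₁, h₁⟩ := hfg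
  obtain ⟨K₂, h₂⟩ := hgl
  obtain ⟨J, hJ⟩ := exists_pow_lt_of_lt_one (by norm_num : (0 : ℝ) < 1 / 2) T.lam_lt_one
  refine ⟨max K₁ K₂ + J, fun z => ?_⟩
  push_cast
  exact T.gaN_trans hJ (T.gaN_mono (by omega) (h₁ z)) (T.gaN_mono (by omega) (h₂ z))

theorem comp {W : Type*} (h : T.UniformlyAsymptotic f g) (p : W → Z) :
    T.UniformlyAsymptotic (f ∘ p) (g ∘ p) :=
  let ⟨K, hK⟩ := h
  ⟨K, fun w => hK (p w)⟩

theorem hIter {u : Z → ℤ} (hu : BddAbove (range fun z => (u z).natAbs))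
    (h : T.UniformlyAsymptotic f g) :
    T.UniformlyAsymptotic (fun z => _root_.hIter T.phi (u z) (f z))
      (fun z => _root_.hIter T.phi (u z) (g z)) := by
  obtain ⟨K, hK⟩ := h
  obtain ⟨C, hC⟩ := hu
  refine ⟨K + C, fun z => T.gaN_mono ?_ (T.hIter_mem_gaN (u z) (hK z))⟩
  exact_mod_cast Nat.add_le_add_left (hC ⟨z, rfl⟩) K

end UniformlyAsymptotic

theorem uniformlyAsymptotic_hIter_iff {Z : Type*} {f g : Z → Y} {u : Z → ℤ}
    (hu : BddAbove (range fun z => (u z).natAbs)) :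
    T.UniformlyAsymptotic (fun z => hIter T.phi (u z) (f z))
        (fun z => hIter T.phi (u z) (g z)) ↔ T.UniformlyAsymptotic f g := by
  refine ⟨fun h => ?_, UniformlyAsymptotic.hIter hu⟩
  have hu' : BddAbove (range fun z => (-u z).natAbs) := by simpa only [Int.natAbs_neg] using hu
  simpa only [← hIter_add, neg_add_cancel, hIter_zero] using h.hIter hu'

theorem continuous_inclusion_gaN_ga (K : ℕ) :
    Continuous[_, T.gaTopology] (inclusion (T.gaN_subset_ga K)) :=
  continuous_iSup_rng continuous_coinduced_rng

theorem continuous_mk_ga {Z : Type*} [TopologicalSpace Z] {g : Z → Y × Y} (hg : Continuous g)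
    {K : ℕ} (hK : ∀ z, g z ∈ T.GaN K) :
    Continuous[_, T.gaTopology] fun z => (⟨g z, T.gaN_subset_ga K (hK z)⟩ : T.Ga) :=
  @Continuous.comp _ _ _ _ _ T.gaTopology _ _ (T.continuous_inclusion_gaN_ga K)
    (hg.subtype_mk hK)

/-- By the cocycle identity `ψ^{c(φ^n x)}` carries the first component at `n` to the one at
`n + 1`, and by `h₁` at `φ^n x` it carries `h ∘ φ^n` to a map uniformly asymptotic to
`h ∘ φ^{n+1}`; invariance under bounded `ψ^u` then gives the step in both directions. -/
theorem uniformlyAsymptotic_cSum_add_one_iff {X : Type*} [TopologicalSpace X] (φ : X ≃ₜ X)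
    (h : X → Y) {c : X → ℤ} (hc : BddAbove (range fun x => (c x).natAbs))
    (h₁ : T.UniformlyAsymptotic (fun x => hIter T.phi (c x) (h x)) (fun x => h (φ x)))
    (n : ℤ) :
    T.UniformlyAsymptotic (fun x => hIter T.phi (cSum φ c (n + 1) x) (h x))
        (fun x => h (hIter φ (n + 1) x)) ↔
      T.UniformlyAsymptotic (fun x => hIter T.phi (cSum φ c n x) (h x))
        (fun x => h (hIter φ n x)) := by
  have hu : BddAbove (range fun x => (c (hIter φ n x)).natAbs) :=
    hc.mono (range_comp_subset_range (hIter φ n) fun x => (c x).natAbs)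
  have hξ : (fun x => hIter T.phi (cSum φ c (n + 1) x) (h x)) =
      fun x => hIter T.phi (c (hIter φ n x)) (hIter T.phi (cSum φ c n x) (h x)) := by
    funext x
    rw [cSum_add_one, add_comm, hIter_add]
  have hφ : (fun x => h (hIter φ (n + 1) x)) = (fun x => h (φ x)) ∘ hIter φ n := by
    funext x
    rw [Function.comp_apply, add_comm, hIter_add, hIter_one]
  have hη : T.UniformlyAsymptotic (fun x => hIter T.phi (c (hIter φ n x)) (h (hIter φ n x)))
      (fun x => h (hIter φ (n + 1) x)) := by
    rw [hφ]
    exact h₁.comp (hIter φ n)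
  rw [hξ]
  exact ⟨fun H => (T.uniformlyAsymptotic_hIter_iff hu).1 (H.trans hη.symm),
    fun H => ((T.uniformlyAsymptotic_hIter_iff hu).2 H).trans hη⟩

theorem uniformlyAsymptotic_cSum {X : Type*} [TopologicalSpace X] (φ : X ≃ₜ X) (h : X → Y)
    {c : X → ℤ} (hc : BddAbove (range fun x => (c x).natAbs))
    (h₁ : T.UniformlyAsymptotic (fun x => hIter T.phi (c x) (h x)) (fun x => h (φ x)))
    (n : ℤ) :
    T.UniformlyAsymptotic (fun x => hIter T.phi (cSum φ c n x) (h x))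
      (fun x => h (hIter φ n x)) := by
  induction n using Int.induction_on with
  | zero => simpa [cSum, hIter_zero] using UniformlyAsymptotic.refl h
  | succ n ih => exact (T.uniformlyAsymptotic_cSum_add_one_iff φ h hc h₁ n).2 ih
  | pred n ih =>
    exact (T.uniformlyAsymptotic_cSum_add_one_iff φ h hc h₁ (-n - 1)).1 (by simpa using ih)

end SmaleSpace

/-- If `(ψ^{c₁(x)}(h(x)), h(φ(x))) ∈ G_ψ^{a,k₀(x)}` for a continuous
`k₀ : X → ℤ_{≥0}`, then for each `n ∈ ℤ` there is a continuous `k_{1,n} : X → ℤ_{≥0}` with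
`ξ₁^n(x) = (ψ^{c₁^n(x)}(h(x)), h(φ^n(x))) ∈ G_ψ^{a,k_{1,n}(x)}` for all `x`; in particular
`ξ₁^n(x) ∈ G_ψ^a` and `ξ₁^n : X → G_ψ^a` is continuous for the inductive limit topology. -/
theorem xi_mem_gaN_and_continuous {X Y : Type*} [MetricSpace X] [CompactSpace X]
    [MetricSpace Y] [CompactSpace Y] (S : SmaleSpace X) (T : SmaleSpace Y)
    (h : X ≃ₜ Y) (c₁ : X → ℤ) (hc₁ : Continuous c₁)
    (k₀ : X → ℕ) (hk₀ : Continuous k₀)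
    (hK : ∀ x : X, (hIter T.phi (c₁ x) (h x), h (S.phi x)) ∈ T.GaN (k₀ x : ℤ)) :
    ∀ n : ℤ,
      (∃ k : X → ℕ, Continuous k ∧ ∀ x : X,
        (hIter T.phi (cSum S.phi c₁ n x) (h x), h (hIter S.phi n x)) ∈ T.GaN (k x : ℤ)) ∧
      (∃ hm : ∀ x : X,
          (hIter T.phi (cSum S.phi c₁ n x) (h x), h (hIter S.phi n x)) ∈ T.Ga,
        @Continuous X ↥T.Ga _ T.gaTopology
          fun x => ⟨(hIter T.phi (cSum S.phi c₁ n x) (h x), h (hIter S.phi n x)), hm x⟩) := by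
  intro n
  have hc : BddAbove (range fun x => (c₁ x).natAbs) :=
    (isCompact_range ((continuous_of_discreteTopology (f := Int.natAbs)).comp hc₁)).bddAbove
  obtain ⟨K, hξ⟩ := T.uniformlyAsymptotic_cSum S.phi h hc
    (.of_bddAbove (isCompact_range hk₀).bddAbove hK) n
  have hcont : Continuous fun x => (hIter T.phi (cSum S.phi c₁ n x) (h x), h (hIter S.phi n x)) :=
    ((continuous_cSum S.phi hc₁ n).hIter T.phi h.continuous).prodMk
      (h.continuous.comp (continuous_hIter S.phi n))
  exact ⟨⟨fun _ => K, continuous_const, hξ⟩, fun x => T.gaN_subset_ga K (hξ x),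
    T.continuous_mk_ga hcont hξ⟩
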